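/- arXiv:1009.0700 — 5 statements merged into one kernel-verified Lean document; each statement's English description precedes it below -/
import Mathlib

section
/- Let A be a linear subspace of ℝ^d and define T : C_0^d[0,∞) → [0,∞] by T(f) = inf { t ≥ 0 : f(t) ∈ A and f(u) ∉ A for all u with t < u ≤ t + 1 } (with inf ∅ = ∞). Then T is Borel measurable. -/
/-! The set of times at which a continuous path lies in the closed set `A` is closed. Hence
`T f < c` iff for some `r < c` in a fixed countable dense set the path meets `A` in `[0, r]`
and avoids `A` on `[r, r + 1]`: the last visit before `r` is then a witness, and conversely,
avoiding `A` on `(t, t + 1]` persists slightly beyond `t + 1`, so `r` may be taken just to the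
right of a witness `t`. Both conditions cut out closed or open sets of paths in the
compact-open topology. -/

open scoped NNReal ENNReal

noncomputable section

/-- `T(f) = inf { t ≥ 0 : f(t) ∈ A and f(u) ∉ A for all t < u ≤ t+1 }`, with
`inf ∅ = ∞`, as a value in `[0,∞]`. -/
def hittingTime (d : ℕ) (A : Submodule ℝ (EuclideanSpace ℝ (Fin d)))
    (f : ℝ≥0 → EuclideanSpace ℝ (Fin d)) : ℝ≥0∞ :=
  sInf {x : ℝ≥0∞ | ∃ t : ℝ≥0, x = (t : ℝ≥0∞) ∧
    f t ∈ (A : Set (EuclideanSpace ℝ (Fin d))) ∧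
    ∀ u : ℝ≥0, t < u → u ≤ t + 1 → f u ∉ (A : Set (EuclideanSpace ℝ (Fin d)))}

open Set

namespace ContinuousMap

variable {X : Type*} [TopologicalSpace X] {S : Set X}

theorem exists_last_mem_of_isClosed (hS : IsClosed S) (f : C(ℝ≥0, X)) {r : ℝ≥0}
    (h : ¬MapsTo f (Icc 0 r) Sᶜ) : ∃ t ≤ r, f t ∈ S ∧ MapsTo f (Ioc t r) Sᶜ := by
  have hK : IsCompact (Icc 0 r ∩ f ⁻¹' S) := isCompact_Icc.inter_right (hS.preimage f.continuous)
  have hne : (Icc 0 r ∩ f ⁻¹' S).Nonempty := by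
    simpa [MapsTo, Set.Nonempty] using h
  obtain ⟨t, ⟨⟨-, htr⟩, hft⟩, hlast⟩ := hK.exists_isGreatest hne
  exact ⟨t, htr, hft, fun u hu hfu => hu.1.not_ge (hlast ⟨⟨zero_le, hu.2⟩, hfu⟩)⟩

theorem exists_gt_mapsTo_Ioo_of_isClosed (hS : IsClosed S) (f : C(ℝ≥0, X)) {t s : ℝ≥0}
    (hts : t < s) (h : MapsTo f (Ioc t s) Sᶜ) : ∃ b > s, MapsTo f (Ioo t b) Sᶜ := by
  have hs : f ⁻¹' Sᶜ ∈ nhds s :=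
    (hS.isOpen_compl.preimage f.continuous).mem_nhds (h ⟨hts, le_rfl⟩)
  obtain ⟨b, hsb, hb⟩ := exists_Ico_subset_of_mem_nhds hs ⟨s + 1, lt_add_one s⟩
  refine ⟨b, hsb, fun u hu => ?_⟩
  rcases le_or_gt u s with hus | hsu
  · exact h ⟨hu.1, hus⟩
  · exact hb ⟨hsu.le, hu.2⟩

end ContinuousMap

section

variable {d : ℕ} (A : Submodule ℝ (EuclideanSpace ℝ (Fin d)))

theorem hittingTime_lt_iff {D : Set ℝ≥0} (hD : Dense D) (f : C(ℝ≥0, EuclideanSpace ℝ (Fin d)))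
    {c : ℝ≥0∞} :
    hittingTime d A f < c ↔ ∃ r ∈ D, (r : ℝ≥0∞) < c ∧
      ¬MapsTo f (Icc 0 r) (A : Set (EuclideanSpace ℝ (Fin d)))ᶜ ∧
      MapsTo f (Icc r (r + 1)) (A : Set (EuclideanSpace ℝ (Fin d)))ᶜ := by
  have hA : IsClosed (A : Set (EuclideanSpace ℝ (Fin d))) := A.closed_of_finiteDimensional
  constructor
  · intro h
    obtain ⟨_, ⟨t, rfl, hft, havoid⟩, htc⟩ := sInf_lt_iff.1 h
    obtain ⟨b, hb, hfb⟩ := f.exists_gt_mapsTo_Ioo_of_isClosed hA (lt_add_one t)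
      fun u hu => havoid u hu.1 hu.2
    obtain ⟨s, hts, hsc⟩ := ENNReal.lt_iff_exists_nnreal_btwn.1 htc
    obtain ⟨r, hrD, htr, hr⟩ :=
      hD.exists_between (lt_min (ENNReal.coe_lt_coe.1 hts) (lt_tsub_iff_right.2 hb))
    have hrs : r < s := hr.trans_le (min_le_left _ _)
    have hrb : r + 1 < b := lt_tsub_iff_right.1 (hr.trans_le (min_le_right _ _))
    refine ⟨r, hrD, (ENNReal.coe_lt_coe.2 hrs).trans hsc, fun hmaps => hmaps ⟨zero_le, htr.le⟩ hft,
      fun u hu => hfb ⟨htr.trans_le hu.1, hu.2.trans_lt hrb⟩⟩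
  · rintro ⟨r, -, hrc, hhit, havoid⟩
    obtain ⟨t, htr, hft, hlast⟩ := f.exists_last_mem_of_isClosed hA hhit
    have hT : hittingTime d A f ≤ t := by
      refine sInf_le ⟨t, rfl, hft, fun u htu hut => ?_⟩
      rcases le_or_gt u r with hur | hru
      · exact hlast ⟨htu, hur⟩
      · exact havoid ⟨hru.le, hut.trans (add_le_add_left htr 1)⟩
    exact hT.trans_lt ((ENNReal.coe_le_coe.2 htr).trans_lt hrc)

theorem measurable_hittingTime_continuousMap [MeasurableSpace C(ℝ≥0, EuclideanSpace ℝ (Fin d))]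
    [OpensMeasurableSpace C(ℝ≥0, EuclideanSpace ℝ (Fin d))] :
    Measurable fun f : C(ℝ≥0, EuclideanSpace ℝ (Fin d)) => hittingTime d A f := by
  have hAc : IsOpen (A : Set (EuclideanSpace ℝ (Fin d)))ᶜ :=
    A.closed_of_finiteDimensional.isOpen_compl
  obtain ⟨D, hDc, hD⟩ := TopologicalSpace.exists_countable_dense ℝ≥0
  refine measurable_of_Iio fun c => ?_
  have hpre : (fun f : C(ℝ≥0, EuclideanSpace ℝ (Fin d)) => hittingTime d A f) ⁻¹' Iio c =
      ⋃ r ∈ D, {_f | (r : ℝ≥0∞) < c} ∩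
        ({f : C(ℝ≥0, EuclideanSpace ℝ (Fin d)) | MapsTo f (Icc 0 r) (A : Set _)ᶜ}ᶜ ∩
          {f : C(ℝ≥0, EuclideanSpace ℝ (Fin d)) | MapsTo f (Icc r (r + 1)) (A : Set _)ᶜ}) := by
    ext f
    simp only [mem_preimage, mem_Iio, hittingTime_lt_iff A hD, mem_iUnion, exists_prop,
      mem_inter_iff, mem_compl_iff, mem_ofPred_eq]
  rw [hpre]
  refine .biUnion hDc fun r _ => .inter (.const _) (.inter ?_ ?_)
  · exact (ContinuousMap.isOpen_setOfPred_mapsTo isCompact_Icc hAc).measurableSet.compl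
  · exact (ContinuousMap.isOpen_setOfPred_mapsTo isCompact_Icc hAc).measurableSet

end

/-- `T` is Borel measurable on `C_0^d[0,∞)`. -/
theorem measurable_hittingTime (d : ℕ) (A : Submodule ℝ (EuclideanSpace ℝ (Fin d))) :
    @Measurable {f : C(ℝ≥0, EuclideanSpace ℝ (Fin d)) // f 0 = 0} ℝ≥0∞
      (borel {f : C(ℝ≥0, EuclideanSpace ℝ (Fin d)) // f 0 = 0}) inferInstance
      (fun f => hittingTime d A (fun t => f.1 t)) := by
  borelize C(ℝ≥0, EuclideanSpace ℝ (Fin d))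
  exact (measurable_hittingTime_continuousMap A).comp continuous_subtype_val.borel_measurable
end
end

section
/- Let A be a linear subspace of ℝ^d, T(f) = inf { t : f(t) ∈ A, f(u) ∉ A for all t < u ≤ t+1 } on C_0^d[0,∞). Then T is continuous at every f with T(f) = 0; equivalently, the discontinuity set of T is contained in T^{-1}((0,∞]). -/
/-!
If `T(f) = 0` then `f` avoids `A` on `(0, 1]`, since a visit at time `u ≤ 1` forces every
admissible time to be at least `u`. As `A` is closed, `f` avoids it on `(0, b)` for some `b > 1`,
hence on every compact window `[ε, 1 + ε]` with `0 < ε < b - 1`. In the compact-open topology,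
every `g` near `f` still avoids `A` on that window; if moreover `g 0 = 0 ∈ A`, the last visit of
`g` to `A` before `ε` is admissible for `g`, so `T(g) ≤ ε`.
-/

open scoped NNReal ENNReal

noncomputable section

open Set Filter Topology

section Topology

variable {α X : Type*} [LinearOrder α] [TopologicalSpace α] [OrderTopology α]
  [TopologicalSpace X] {f : α → X} {s : Set X}

theorem exists_gt_forall_notMem_Ioo [NoMaxOrder α] (hs : IsClosed s) (hf : Continuous f)
    {a c : α} (hac : a < c) (h : ∀ u ∈ Ioc a c, f u ∉ s) :
    ∃ b, c < b ∧ ∀ u ∈ Ioo a b, f u ∉ s := by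
  have hnhds : f ⁻¹' sᶜ ∈ 𝓝 c :=
    (hs.isOpen_compl.preimage hf).mem_nhds (h c ⟨hac, le_rfl⟩)
  obtain ⟨b, hcb, hsub⟩ := exists_Ico_subset_of_mem_nhds hnhds (exists_gt c)
  refine ⟨b, hcb, fun u hu => ?_⟩
  rcases le_or_gt u c with huc | hcu
  · exact h u ⟨hu.1, huc⟩
  · exact hsub ⟨hcu.le, hu.2⟩

end Topology

section HittingTime

variable {d : ℕ} {A : Submodule ℝ (EuclideanSpace ℝ (Fin d))}
  {f : ℝ≥0 → EuclideanSpace ℝ (Fin d)}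

theorem hittingTime_le {t : ℝ≥0} (ht : f t ∈ A)
    (hgap : ∀ u, t < u → u ≤ t + 1 → f u ∉ A) : hittingTime d A f ≤ t :=
  sInf_le ⟨t, rfl, ht, hgap⟩

theorem coe_le_hittingTime_of_mem {u : ℝ≥0} (hu1 : u ≤ 1) (hu : f u ∈ A) :
    (u : ℝ≥0∞) ≤ hittingTime d A f := by
  refine le_sInf ?_
  rintro _ ⟨t, rfl, -, hgap⟩
  rw [ENNReal.coe_le_coe]
  by_contra! htu
  exact hgap u htu (hu1.trans le_add_self) hu

theorem notMem_of_hittingTime_eq_zero (hT : hittingTime d A f = 0) :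
    ∀ u ∈ Ioc (0 : ℝ≥0) 1, f u ∉ A := fun u hu hmem => by
  have := coe_le_hittingTime_of_mem hu.2 hmem
  rw [hT, nonpos_iff_eq_zero, ENNReal.coe_eq_zero] at this
  exact hu.1.ne' this

theorem hittingTime_le_of_forall_notMem_Ioc (hf : Continuous f) (h0 : f 0 ∈ A) {ε : ℝ≥0}
    (hgap : ∀ u ∈ Ioc ε (1 + ε), f u ∉ A) : hittingTime d A f ≤ ε := by
  have hvisits : IsCompact (Icc 0 ε ∩ f ⁻¹' A) :=
    isCompact_Icc.inter_right ((Submodule.closed_of_finiteDimensional A).preimage hf)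
  obtain ⟨t, ⟨⟨-, htε⟩, ht⟩, hlast⟩ :=
    hvisits.exists_isGreatest ⟨0, ⟨le_rfl, zero_le⟩, h0⟩
  refine (hittingTime_le ht fun u htu hu1 hmem => ?_).trans (ENNReal.coe_le_coe.2 htε)
  rcases le_or_gt u ε with huε | hεu
  · exact htu.not_ge (hlast ⟨⟨zero_le, huε⟩, hmem⟩)
  · exact hgap u ⟨hεu, hu1.trans (by rw [add_comm]; gcongr)⟩ hmem

end HittingTime

theorem continuousWithinAt_hittingTime_general (d : ℕ)
    (A : Submodule ℝ (EuclideanSpace ℝ (Fin d)))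
    (f : C(ℝ≥0, EuclideanSpace ℝ (Fin d)))
    (hT : hittingTime d A (fun t => f t) = 0) :
    ContinuousWithinAt (fun g : C(ℝ≥0, EuclideanSpace ℝ (Fin d)) =>
        hittingTime d A (fun t => g t))
      {g : C(ℝ≥0, EuclideanSpace ℝ (Fin d)) | g 0 = 0} f := by
  rw [ContinuousWithinAt, hT, ENNReal.tendsto_nhds_zero]
  intro ε₀ hε₀
  have hA : IsClosed (A : Set (EuclideanSpace ℝ (Fin d))) := A.closed_of_finiteDimensional
  obtain ⟨b, hb1, hfb⟩ :=
    exists_gt_forall_notMem_Ioo hA f.continuous zero_lt_one (notMem_of_hittingTime_eq_zero hT)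
  obtain ⟨ε, hε0, hεlt⟩ := ENNReal.lt_iff_exists_nnreal_btwn.1
    (lt_min hε₀ (ENNReal.coe_pos.2 (tsub_pos_of_lt hb1)))
  have hεb : 1 + ε < b :=
    lt_tsub_iff_left.1 (ENNReal.coe_lt_coe.1 (hεlt.trans_le (min_le_right _ _)))
  have hwindow : ∀ᶠ g : C(ℝ≥0, EuclideanSpace ℝ (Fin d)) in 𝓝 f,
      MapsTo g (Icc ε (1 + ε)) Aᶜ :=
    ContinuousMap.eventually_mapsTo isCompact_Icc hA.isOpen_compl
      fun u hu => hfb u ⟨ENNReal.coe_pos.1 hε0 |>.trans_le hu.1, hu.2.trans_lt hεb⟩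
  filter_upwards [nhdsWithin_le_nhds hwindow, self_mem_nhdsWithin] with g hg hg0
  exact (hittingTime_le_of_forall_notMem_Ioc g.continuous (hg0 ▸ A.zero_mem)
    fun u hu => hg (Ioc_subset_Icc_self hu)).trans (hεlt.le.trans (min_le_left _ _))

/-- `T` is continuous (as a map on `C_0^d[0,∞)`, with the topology of uniform
convergence on compacts) at every `f` with `T(f) = 0`. -/
theorem continuousWithinAt_hittingTime (d : ℕ)
    (A : Submodule ℝ (EuclideanSpace ℝ (Fin d)))
    (f : C(ℝ≥0, EuclideanSpace ℝ (Fin d))) (h0 : f 0 = 0)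
    (hT : hittingTime d A (fun t => f t) = 0) :
    ContinuousWithinAt (fun g : C(ℝ≥0, EuclideanSpace ℝ (Fin d)) =>
        hittingTime d A (fun t => g t))
      {g : C(ℝ≥0, EuclideanSpace ℝ (Fin d)) | g 0 = 0} f :=
  continuousWithinAt_hittingTime_general d A f hT
end
end

section
/- Let (X_k) be i.i.d. ℤ^d-valued random variables, S_k = X_1 + ⋯ + X_k, and let A be a linear subspace of ℝ^d. Fix n and let T_n = inf { k ≥ 0 : S_k ∈ A and S^{int}_{k+t} ∉ A for all t ∈ (0, n] }, where S^{int} is the linear interpolation of the walk. Assume P(T_n < ∞) = 1. Then for all Borel sets B_1, …, B_n ⊆ ℝ^d: P(S_{T_n+k} − S_{T_n} ∈ B_k, k = 1,…,n) = P(S_k ∈ B_k, k = 1,…,n | S^{int}_t ∉ A for all t ∈ (0,n]). -/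
/-! Write `τ = T_n` and call each `k ∈ TnSet` the start of a long excursion from `A`. Then
`{τ = m} = F_m ∩ θ_m⁻¹ G`, where `F_m` says that `S_m ∈ A` and that no long excursion starts
before `m - n` (an event of `X_0, …, X_{m-1}`), and `θ_m⁻¹ G` says that the walk restarted at
time `m` avoids `A` on `(0, n]`: on the latter event no long excursion starts in `(m - n, m)`,
since it would have to avoid `S_m ∈ A`. Independence and stationarity of the increments give
`P(τ = m, θ_m ∈ H) = P(F_m) · P(G ∩ H)`. Summing over `m` with `H` trivial shows
`∑ P(F_m) = P(G)⁻¹`, and summing with general `H` gives the conditional law. Since the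
increments take countably many values, every event determined by finitely many of them is
measurable. -/

open scoped NNReal ENNReal
open MeasureTheory ProbabilityTheory

noncomputable section

/-- Partial sums `S_k = X_1 + ⋯ + X_k` (here `X` is indexed from `0`). -/
def walk {Ω : Type*} (d : ℕ) (X : ℕ → Ω → EuclideanSpace ℝ (Fin d)) (k : ℕ)
    (ω : Ω) : EuclideanSpace ℝ (Fin d) :=
  ∑ i ∈ Finset.range k, X i ω

/-- Linearly interpolated trajectory `S^{int}_t`. -/
def walkInt {Ω : Type*} (d : ℕ) (X : ℕ → Ω → EuclideanSpace ℝ (Fin d)) (t : ℝ)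
    (ω : Ω) : EuclideanSpace ℝ (Fin d) :=
  walk d X ⌊t⌋₊ ω + (t - ⌊t⌋₊) • X ⌊t⌋₊ ω

/-- `T_n(ω)`'s defining set: `{k : S_k ∈ A, S^{int}_{k+t} ∉ A for t ∈ (0,n]}`. -/
def TnSet {Ω : Type*} (d n : ℕ) (A : Submodule ℝ (EuclideanSpace ℝ (Fin d)))
    (X : ℕ → Ω → EuclideanSpace ℝ (Fin d)) (ω : Ω) : Set ℕ :=
  {k : ℕ | walk d X k ω ∈ (A : Set (EuclideanSpace ℝ (Fin d))) ∧
    ∀ t : ℝ, (k : ℝ) < t → t ≤ (k : ℝ) + n →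
      walkInt d X t ω ∉ (A : Set (EuclideanSpace ℝ (Fin d)))}

open Function

theorem DependsOn.comp_add {α : Type*} {P : (ℕ → α) → Prop} {t : Finset ℕ}
    (hP : DependsOn P t) (m : ℕ) :
    DependsOn (fun x : ℕ → α => P fun i => x (m + i)) (t.image (m + ·)) :=
  fun _ _ h => hP fun i hi => h (m + i) (by simpa using Finset.mem_image_of_mem (m + ·) hi)

theorem MeasureTheory.measure_eq_tsum_measure_inter {Ω ι : Type*} [MeasurableSpace Ω]
    [Countable ι] {μ : Measure Ω} {T : ι → Set Ω} (hT : ∀ i, MeasurableSet (T i))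
    (hdisj : Pairwise (Disjoint on T)) (hcover : μ (⋃ i, T i)ᶜ = 0) (R : Set Ω) :
    μ R = ∑' i, μ (R ∩ T i) := by
  rw [← measure_inter_conull hcover, ← Measure.restrict_apply' (MeasurableSet.iUnion hT),
    Measure.restrict_iUnion hdisj hT, Measure.sum_apply_of_countable]
  exact tsum_congr fun i => Measure.restrict_apply' (hT i)

namespace ProbabilityTheory

theorem exists_measurableSet_setOf_eq_preimage {Ω E : Type*} [MeasurableSpace E]
    [MeasurableSingletonClass E] {S : Set E} (hS : S.Countable) {P : (ℕ → E) → Prop}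
    {s : Finset ℕ} (hP : DependsOn P s) :
    ∃ C : Set (s → E), MeasurableSet C ∧ ∀ Y : Ω → ℕ → E, (∀ ω i, Y ω i ∈ S) →
      {ω | P (Y ω)} = (fun ω => s.restrict (Y ω)) ⁻¹' C := by
  refine ⟨s.restrict '' {x | P x} ∩ Set.univ.pi fun _ => S,
    ((Set.countable_univ_pi fun _ => hS).mono Set.inter_subset_right).measurableSet,
    fun Y hY => Set.ext fun ω => ?_⟩
  simp only [Set.mem_ofPred_eq, Set.mem_preimage, Set.mem_inter_iff, Set.mem_univ_pi,
    Finset.restrict, hY, implies_true, and_true]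
  exact ⟨fun h => ⟨_, h, rfl⟩, fun ⟨x, hx, hxY⟩ => hP (fun i hi => congrFun hxY ⟨i, hi⟩) ▸ hx⟩

variable {Ω E : Type*} [MeasurableSpace Ω] [MeasurableSpace E] {μ : Measure Ω}
  {X : ℕ → Ω → E} {S : Set E}

theorem measurable_restrict_comp (hX : ∀ i, Measurable (X i)) (g : ℕ → ℕ) (s : Finset ℕ) :
    Measurable fun ω => s.restrict fun i => X (g i) ω :=
  measurable_pi_lambda _ fun _ => hX _

theorem map_restrict_comp_eq_pi (hX : ∀ i, Measurable (X i)) (hindep : iIndepFun X μ)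
    (hident : ∀ i, IdentDistrib (X i) (X 0) μ μ) {g : ℕ → ℕ} (hg : g.Injective)
    (s : Finset ℕ) :
    μ.map (fun ω => s.restrict fun i => X (g i) ω) = Measure.pi fun _ => μ.map (X 0) := by
  have h := (hindep.precomp (g := fun i : s => g i)
    (hg.comp Subtype.val_injective)).map_fun_eq_pi_map fun i => (hX _).aemeasurable
  simp only [(hident _).map_eq] at h
  exact h

variable [MeasurableSingletonClass E]

theorem measurableSet_setOf_of_dependsOn (hX : ∀ i, Measurable (X i)) (hS : S.Countable)
    (hXS : ∀ i ω, X i ω ∈ S) {P : (ℕ → E) → Prop} {s : Finset ℕ} (hP : DependsOn P s) :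
    MeasurableSet {ω | P fun i => X i ω} := by
  obtain ⟨C, hC, hPC⟩ := exists_measurableSet_setOf_eq_preimage (Ω := Ω) hS hP
  rw [hPC _ fun ω i => hXS i ω]
  exact measurable_restrict_comp hX id s hC

theorem measure_setOf_and_eq_mul_of_dependsOn (hX : ∀ i, Measurable (X i)) (hS : S.Countable)
    (hXS : ∀ i ω, X i ω ∈ S) (hindep : iIndepFun X μ) {P Q : (ℕ → E) → Prop} {s t : Finset ℕ}
    (hP : DependsOn P s) (hQ : DependsOn Q t) (hst : Disjoint s t) :
    μ {ω | P (fun i => X i ω) ∧ Q fun i => X i ω} =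
      μ {ω | P fun i => X i ω} * μ {ω | Q fun i => X i ω} := by
  obtain ⟨C, hC, hPC⟩ := exists_measurableSet_setOf_eq_preimage (Ω := Ω) hS hP
  obtain ⟨D, hD, hQD⟩ := exists_measurableSet_setOf_eq_preimage (Ω := Ω) hS hQ
  rw [Set.ofPred_and, hPC _ fun ω i => hXS i ω, hQD _ fun ω i => hXS i ω]
  exact (hindep.indepFun_finset s t hst hX).measure_inter_preimage_eq_mul _ _ hC hD

theorem measure_setOf_comp_eq (hX : ∀ i, Measurable (X i)) (hS : S.Countable)
    (hXS : ∀ i ω, X i ω ∈ S) (hindep : iIndepFun X μ)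
    (hident : ∀ i, IdentDistrib (X i) (X 0) μ μ) {g : ℕ → ℕ} (hg : g.Injective)
    {P : (ℕ → E) → Prop} {s : Finset ℕ} (hP : DependsOn P s) :
    μ {ω | P fun i => X (g i) ω} = μ {ω | P fun i => X i ω} := by
  obtain ⟨C, hC, hPC⟩ := exists_measurableSet_setOf_eq_preimage (Ω := Ω) hS hP
  have hid := map_restrict_comp_eq_pi hX hindep hident injective_id s
  simp only [id_eq] at hid
  rw [hPC _ fun ω i => hXS (g i) ω, hPC _ fun ω i => hXS i ω,
    ← Measure.map_apply (measurable_restrict_comp hX g s) hC,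
    ← Measure.map_apply (measurable_restrict_comp hX (fun i => i) s) hC,
    map_restrict_comp_eq_pi hX hindep hident hg, hid]

theorem measure_setOf_and_shift_eq_mul (hX : ∀ i, Measurable (X i)) (hS : S.Countable)
    (hXS : ∀ i ω, X i ω ∈ S) (hindep : iIndepFun X μ)
    (hident : ∀ i, IdentDistrib (X i) (X 0) μ μ) {P Q : (ℕ → E) → Prop} {m : ℕ}
    {t : Finset ℕ} (hP : DependsOn P (Finset.range m)) (hQ : DependsOn Q t) :
    μ {ω | P (fun i => X i ω) ∧ Q fun i => X (m + i) ω} =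
      μ {ω | P fun i => X i ω} * μ {ω | Q fun i => X i ω} := by
  have hdisj : Disjoint (Finset.range m) (t.image (m + ·)) := by
    simp only [Finset.disjoint_left, Finset.mem_range, Finset.mem_image]
    omega
  rw [measure_setOf_and_eq_mul_of_dependsOn hX hS hXS hindep hP (hQ.comp_add m) hdisj,
    measure_setOf_comp_eq hX hS hXS hindep hident (add_right_injective m) hQ]

theorem measure_setOf_shift_at_eq_cond [IsProbabilityMeasure μ] (hX : ∀ i, Measurable (X i))
    (hS : S.Countable) (hXS : ∀ i ω, X i ω ∈ S) (hindep : iIndepFun X μ)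
    (hident : ∀ i, IdentDistrib (X i) (X 0) μ μ) {F : ℕ → (ℕ → E) → Prop}
    {G H : (ℕ → E) → Prop} {t : Finset ℕ} (hF : ∀ m, DependsOn (F m) (Finset.range m))
    (hG : DependsOn G t) (hH : DependsOn H t) (τ : Ω → ℕ)
    (hτ : ∀ ω m, F m (fun i => X i ω) → G (fun i => X (m + i) ω) → τ ω = m)
    (hcover : ∀ᵐ ω ∂μ, ∃ m, F m (fun i => X i ω) ∧ G fun i => X (m + i) ω) :
    μ {ω | H fun i => X (τ ω + i) ω} =
      μ[|{ω | G fun i => X i ω}] {ω | H fun i => X i ω} := by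
  set T : ℕ → Set Ω := fun m => {ω | F m (fun i => X i ω) ∧ G fun i => X (m + i) ω}
  have hGH : DependsOn (fun x => G x ∧ H x) t := fun _ _ hxy =>
    congrArg₂ And (hG hxy) (hH hxy)
  have hTmeas : ∀ m, MeasurableSet (T m) := fun m =>
    (measurableSet_setOf_of_dependsOn hX hS hXS (hF m)).inter
      (measurableSet_setOf_of_dependsOn (fun i => hX (m + i)) hS (fun i => hXS (m + i)) hG)
  have hdisj : Pairwise (Disjoint on T) := fun a b hab => Set.disjoint_left.2
    fun ω ha hb => hab ((hτ ω a ha.1 ha.2).symm.trans (hτ ω b hb.1 hb.2))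
  have hnull : μ (⋃ m, T m)ᶜ = 0 := measure_eq_zero_iff_ae_notMem.2 <|
    hcover.mono fun ω ⟨m, hm⟩ hω => hω (Set.mem_iUnion.2 ⟨m, hm⟩)
  have hsplit := measure_eq_tsum_measure_inter hTmeas hdisj hnull
  have hHT : ∀ m, {ω | H fun i => X (τ ω + i) ω} ∩ T m =
      {ω | F m (fun i => X i ω) ∧ (G fun i => X (m + i) ω) ∧ H fun i => X (m + i) ω} :=
    fun m => Set.ext fun ω =>
      ⟨fun ⟨hH, hF, hG⟩ => ⟨hF, hG, hτ ω m hF hG ▸ hH⟩,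
        fun ⟨hF, hG, hH⟩ => ⟨show H _ from (hτ ω m hF hG).symm ▸ hH, hF, hG⟩⟩
  have hone : (∑' m, μ {ω | F m fun i => X i ω}) * μ {ω | G fun i => X i ω} = 1 := by
    rw [← ENNReal.tsum_mul_right, ← measure_univ (μ := μ), hsplit Set.univ]
    exact tsum_congr fun m => by
      rw [Set.univ_inter]
      exact (measure_setOf_and_shift_eq_mul hX hS hXS hindep hident (hF m) hG).symm
  rw [hsplit {ω | H fun i => X (τ ω + i) ω},
    cond_apply (measurableSet_setOf_of_dependsOn hX hS hXS hG), ← Set.ofPred_and,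
    ← ENNReal.eq_inv_of_mul_eq_one_left hone, ← ENNReal.tsum_mul_right]
  exact tsum_congr fun m => by
    rw [hHT, measure_setOf_and_shift_eq_mul hX hS hXS hindep hident (hF m) hGH]

end ProbabilityTheory

theorem countable_setOf_forall_exists_intCast (d : ℕ) :
    {v : EuclideanSpace ℝ (Fin d) | ∀ i, ∃ m : ℤ, v i = m}.Countable :=
  (Set.countable_range fun z : Fin d → ℤ => WithLp.toLp 2 fun i => (z i : ℝ)).mono
    fun v hv => Set.mem_range.2 ⟨fun i => (hv i).choose, by ext i; exact (hv i).choose_spec.symm⟩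

section Walk

variable {Ω Ω' : Type*} {d : ℕ}

theorem walk_congr {X : ℕ → Ω → EuclideanSpace ℝ (Fin d)}
    {X' : ℕ → Ω' → EuclideanSpace ℝ (Fin d)} {ω : Ω} {ω' : Ω'} {k : ℕ}
    (h : ∀ i < k, X i ω = X' i ω') : walk d X k ω = walk d X' k ω' :=
  Finset.sum_congr rfl fun i hi => h i (Finset.mem_range.1 hi)

theorem walkInt_natCast (X : ℕ → Ω → EuclideanSpace ℝ (Fin d)) (m : ℕ) (ω : Ω) :
    walkInt d X m ω = walk d X m ω := by
  simp [walkInt]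

theorem walkInt_congr {X : ℕ → Ω → EuclideanSpace ℝ (Fin d)}
    {X' : ℕ → Ω' → EuclideanSpace ℝ (Fin d)} {ω : Ω} {ω' : Ω'} {t : ℝ} {m : ℕ}
    (ht : 0 ≤ t) (htm : t ≤ m) (h : ∀ i < m, X i ω = X' i ω') :
    walkInt d X t ω = walkInt d X' t ω' := by
  rcases (Nat.floor_le_of_le htm).lt_or_eq with hlt | heq
  · rw [walkInt, walkInt, walk_congr fun i hi => h i (hi.trans hlt), h _ hlt]
  · obtain rfl : t = m := htm.antisymm (heq ▸ Nat.floor_le ht)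
    rw [walkInt_natCast, walkInt_natCast, walk_congr h]

theorem walk_add (X : ℕ → Ω → EuclideanSpace ℝ (Fin d)) (m j : ℕ) (ω : Ω) :
    walk d X (m + j) ω = walk d X m ω + walk d (fun i => X (m + i)) j ω :=
  Finset.sum_range_add (fun i => X i ω) m j

theorem walkInt_natCast_add (X : ℕ → Ω → EuclideanSpace ℝ (Fin d)) (m : ℕ) {s : ℝ}
    (hs : 0 ≤ s) (ω : Ω) :
    walkInt d X (m + s) ω = walk d X m ω + walkInt d (fun i => X (m + i)) s ω := by
  have hfloor : ⌊(m : ℝ) + s⌋₊ = m + ⌊s⌋₊ := by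
    rw [add_comm, Nat.floor_add_natCast hs, add_comm]
  simp only [walkInt, hfloor, walk_add X m ⌊s⌋₊ ω, Nat.cast_add, add_sub_add_left_eq_sub,
    add_assoc]

end Walk

section Excursion

variable {Ω Ω' : Type*} {d n : ℕ} {A : Submodule ℝ (EuclideanSpace ℝ (Fin d))}

/- Events of an increment sequence `x`, read through the walk `walk d (fun i x => x i) · x`
whose `i`-th increment is `x i`. -/
def Avoids (d n : ℕ) (A : Submodule ℝ (EuclideanSpace ℝ (Fin d)))
    (x : ℕ → EuclideanSpace ℝ (Fin d)) : Prop :=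
  ∀ t : ℝ, 0 < t → t ≤ n → walkInt d (fun i x => x i) t x ∉ (A : Set (EuclideanSpace ℝ (Fin d)))

def HitsWithoutEarlyExcursion (d n : ℕ) (A : Submodule ℝ (EuclideanSpace ℝ (Fin d))) (m : ℕ)
    (x : ℕ → EuclideanSpace ℝ (Fin d)) : Prop :=
  walk d (fun i x => x i) m x ∈ (A : Set (EuclideanSpace ℝ (Fin d))) ∧
    ∀ k, k + n < m → k ∉ TnSet d n A (fun i x => x i) x

def WalkIn {d n : ℕ} (B : Fin n → Set (EuclideanSpace ℝ (Fin d)))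
    (x : ℕ → EuclideanSpace ℝ (Fin d)) : Prop :=
  ∀ k : Fin n, walk d (fun i x => x i) (k + 1) x ∈ B k

theorem mem_TnSet_congr {X : ℕ → Ω → EuclideanSpace ℝ (Fin d)}
    {X' : ℕ → Ω' → EuclideanSpace ℝ (Fin d)} {ω : Ω} {ω' : Ω'} {k : ℕ}
    (h : ∀ i < k + n, X i ω = X' i ω') : k ∈ TnSet d n A X ω ↔ k ∈ TnSet d n A X' ω' := by
  refine and_congr (by rw [walk_congr fun i hi => h i (by omega)]) <| forall_congr' fun t =>
    imp_congr_right fun hkt => imp_congr_right fun htk => ?_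
  rw [walkInt_congr ((Nat.cast_nonneg k).trans hkt.le) (by exact_mod_cast htk) h]

theorem dependsOn_avoids : DependsOn (Avoids d n A) (Finset.range n) :=
  fun x y hxy => propext <| forall_congr' fun t => imp_congr_right fun ht =>
    imp_congr_right fun htn => by
      rw [walkInt_congr (X' := fun i x => x i) (ω' := y) ht.le htn
        fun i hi => hxy i (by simpa using hi)]

theorem dependsOn_hitsWithoutEarlyExcursion (m : ℕ) :
    DependsOn (HitsWithoutEarlyExcursion d n A m) (Finset.range m) :=
  fun x y hxy => propext <| and_congr
    (by rw [walk_congr (X' := fun i x => x i) (ω' := y) fun i hi => hxy i (by simpa using hi)])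
    (forall_congr' fun k => imp_congr_right fun hk => not_congr <|
      mem_TnSet_congr fun i hi => hxy i (by simp only [Finset.coe_range, Set.mem_Iio]; omega))

theorem dependsOn_walkIn (B : Fin n → Set (EuclideanSpace ℝ (Fin d))) :
    DependsOn (WalkIn B) (Finset.range n) :=
  fun x y hxy => propext <| forall_congr' fun k => by
    rw [walk_congr (X' := fun i x => x i) (ω' := y) fun i hi =>
      hxy i (by simp only [Finset.coe_range, Set.mem_Iio]; omega)]

theorem mem_TnSet_iff {X : ℕ → Ω → EuclideanSpace ℝ (Fin d)} {ω : Ω} {m : ℕ} :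
    m ∈ TnSet d n A X ω ↔
      walk d X m ω ∈ (A : Set (EuclideanSpace ℝ (Fin d))) ∧ Avoids d n A fun i => X (m + i) ω := by
  refine and_congr_right fun hm => ⟨fun hav s hs hsn hmem => ?_, fun hav t ht htn hmem => ?_⟩
  · refine hav (m + s) (by linarith) (by linarith) ?_
    rw [walkInt_natCast_add X m hs.le]
    exact A.add_mem hm hmem
  · have hsplit := walkInt_natCast_add X m (sub_nonneg.2 ht.le) ω
    rw [add_sub_cancel] at hsplit
    refine hav (t - m) (by linarith) (by linarith) ?_
    change walkInt d (fun i => X (m + i)) (t - m) ω ∈ A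
    rw [eq_sub_of_add_eq' hsplit.symm]
    exact A.sub_mem hmem hm

theorem walk_notMem_of_mem_TnSet {X : ℕ → Ω → EuclideanSpace ℝ (Fin d)} {ω : Ω} {k m : ℕ}
    (hk : k ∈ TnSet d n A X ω) (hkm : k < m) (hmk : m ≤ k + n) :
    walk d X m ω ∉ (A : Set (EuclideanSpace ℝ (Fin d))) := by
  rw [← walkInt_natCast]
  exact hk.2 m (by exact_mod_cast hkm) (by exact_mod_cast hmk)

theorem isLeast_TnSet_iff {X : ℕ → Ω → EuclideanSpace ℝ (Fin d)} {ω : Ω} {m : ℕ} :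
    IsLeast (TnSet d n A X ω) m ↔
      HitsWithoutEarlyExcursion d n A m (fun i => X i ω) ∧ Avoids d n A fun i => X (m + i) ω := by
  constructor
  · rintro ⟨hm, hleast⟩
    obtain ⟨hA, hav⟩ := mem_TnSet_iff.1 hm
    exact ⟨⟨hA, fun k hk hkT => absurd (hleast hkT) (by omega)⟩, hav⟩
  · rintro ⟨⟨hA, hearly⟩, hav⟩
    refine ⟨mem_TnSet_iff.2 ⟨hA, hav⟩, fun k hk => le_of_not_gt fun hkm => ?_⟩
    by_cases hkn : k + n < m
    · exact hearly k hkn hk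
    · exact walk_notMem_of_mem_TnSet hk hkm (by omega) hA

end Excursion

theorem bolthausen_equation_general {Ω : Type*} [MeasurableSpace Ω] (μ : Measure Ω)
    [IsProbabilityMeasure μ] (d n : ℕ)
    (A : Submodule ℝ (EuclideanSpace ℝ (Fin d)))
    (X : ℕ → Ω → EuclideanSpace ℝ (Fin d))
    (hXmeas : ∀ k, Measurable (X k))
    (hXint : ∀ k ω i, ∃ m : ℤ, X k ω i = (m : ℝ))
    (hindep : iIndepFun X μ)
    (hident : ∀ k, IdentDistrib (X k) (X 0) μ μ)
    (hfin : ∀ᵐ ω ∂μ, (TnSet d n A X ω).Nonempty)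
    (B : Fin n → Set (EuclideanSpace ℝ (Fin d))) :
    (μ[|{ω | ∀ t : ℝ, 0 < t → t ≤ (n : ℝ) →
        walkInt d X t ω ∉ (A : Set (EuclideanSpace ℝ (Fin d)))}])
      {ω | ∀ k : Fin n, walk d X ((k : ℕ) + 1) ω ∈ B k} =
    μ {ω | ∀ k : Fin n,
        walk d X (sInf (TnSet d n A X ω) + (k : ℕ) + 1) ω
          - walk d X (sInf (TnSet d n A X ω)) ω ∈ B k} := by
  have key := measure_setOf_shift_at_eq_cond hXmeas (countable_setOf_forall_exists_intCast d)
    (fun i ω => hXint i ω) hindep hident dependsOn_hitsWithoutEarlyExcursion dependsOn_avoids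
    (dependsOn_walkIn B) (fun ω => sInf (TnSet d n A X ω))
    (fun ω m hF hG => (isLeast_TnSet_iff.2 ⟨hF, hG⟩).csInf_eq)
    (hfin.mono fun ω hne => ⟨_, isLeast_TnSet_iff.1 (isLeast_csInf hne)⟩)
  have hincr : ∀ (m : ℕ) (k : Fin n) ω, walk d X (m + k + 1) ω - walk d X m ω =
      walk d (fun i => X (m + i)) (k + 1) ω := fun m k ω => by
    rw [add_assoc, walk_add, add_sub_cancel_left]
  simp only [hincr]
  exact key.symm

/-- Bolthausen-type equation: the post-`T_n` increments of the walk have the law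
of the walk conditioned to avoid `A` (via its interpolated trajectory) on `(0,n]`. -/
theorem bolthausen_equation {Ω : Type*} [MeasurableSpace Ω] (μ : Measure Ω)
    [IsProbabilityMeasure μ] (d n : ℕ)
    (A : Submodule ℝ (EuclideanSpace ℝ (Fin d)))
    (X : ℕ → Ω → EuclideanSpace ℝ (Fin d))
    (hXmeas : ∀ k, Measurable (X k))
    (hXint : ∀ k ω i, ∃ m : ℤ, X k ω i = (m : ℝ))
    (hindep : iIndepFun X μ)
    (hident : ∀ k, IdentDistrib (X k) (X 0) μ μ)
    (hfin : ∀ᵐ ω ∂μ, (TnSet d n A X ω).Nonempty)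
    (hpos : μ {ω | ∀ t : ℝ, 0 < t → t ≤ (n : ℝ) →
      walkInt d X t ω ∉ (A : Set (EuclideanSpace ℝ (Fin d)))} ≠ 0)
    (B : Fin n → Set (EuclideanSpace ℝ (Fin d)))
    (hB : ∀ k, MeasurableSet (B k)) :
    (μ[|{ω | ∀ t : ℝ, 0 < t → t ≤ (n : ℝ) →
        walkInt d X t ω ∉ (A : Set (EuclideanSpace ℝ (Fin d)))}])
      {ω | ∀ k : Fin n, walk d X ((k : ℕ) + 1) ω ∈ B k} =
    μ {ω | ∀ k : Fin n,
        walk d X (sInf (TnSet d n A X ω) + (k : ℕ) + 1) ω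
          - walk d X (sInf (TnSet d n A X ω)) ω ∈ B k} :=
  bolthausen_equation_general μ d n A X hXmeas hXint hindep hident hfin B
end
end

section
/- (Continuous mapping theorem, a.e.-continuous version) Let S, S' be metric spaces, μ_n, μ Borel probability measures on S with μ_n ⇒ μ, and h : S → S' a Borel measurable map whose set of discontinuity points D_h satisfies μ(D_h) = 0. Then μ_n ∘ h^{-1} ⇒ μ ∘ h^{-1} on S'. -/
/-! A point of `closure (h⁻¹' F)` at which `h` is continuous lies in `h⁻¹' F` when `F` is closed,
so `μ (closure (h⁻¹' F)) = μ (h⁻¹' F)` as soon as `h` is `μ`-a.e. continuous. The closed-set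
half of the portmanteau theorem then gives
`limsup μₙ (h⁻¹' F) ≤ limsup μₙ (closure (h⁻¹' F)) ≤ μ (closure (h⁻¹' F)) = μ (h⁻¹' F)`
for every closed `F`, which is the portmanteau criterion for `μₙ ∘ h⁻¹ ⇒ μ ∘ h⁻¹`. -/

open MeasureTheory Filter Topology
open scoped BoundedContinuousFunction

section ClosurePreimage

variable {Ω Ω' : Type*} [MeasurableSpace Ω] [TopologicalSpace Ω] [TopologicalSpace Ω']

lemma measure_closure_preimage_le_of_ae_continuousAt {ν : Measure Ω} {f : Ω → Ω'}
    (hf : ∀ᵐ x ∂ν, ContinuousAt f x) {F : Set Ω'} (hF : IsClosed F) :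
    ν (closure (f ⁻¹' F)) ≤ ν (f ⁻¹' F) := by
  refine measure_mono_ae ?_
  filter_upwards [hf] with x hx hxF
  exact hF.closure_subset (hx.continuousWithinAt.mem_closure hxF (Set.mapsTo_preimage f F))

end ClosurePreimage

namespace MeasureTheory.ProbabilityMeasure

variable {Ω Ω' ι : Type*} [MeasurableSpace Ω] [TopologicalSpace Ω] [OpensMeasurableSpace Ω]
  [HasOuterApproxClosed Ω] [MeasurableSpace Ω'] [TopologicalSpace Ω'] [OpensMeasurableSpace Ω']

lemma tendsto_map_of_tendsto_of_ae_continuousAt {L : Filter ι} [L.IsCountablyGenerated]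
    {νs : ι → ProbabilityMeasure Ω} {ν : ProbabilityMeasure Ω} (lim : Tendsto νs L (𝓝 ν))
    {f : Ω → Ω'} (hf_meas : Measurable f) (hf : ∀ᵐ x ∂(ν : Measure Ω), ContinuousAt f x) :
    Tendsto (fun i ↦ (νs i).map hf_meas.aemeasurable) L (𝓝 (ν.map hf_meas.aemeasurable)) := by
  refine tendsto_of_forall_isClosed_limsup_le' fun F hF ↦ ?_
  simp only [toMeasure_map, Measure.map_apply hf_meas hF.measurableSet]
  calc L.limsup (fun i ↦ (νs i : Measure Ω) (f ⁻¹' F))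
      ≤ L.limsup (fun i ↦ (νs i : Measure Ω) (closure (f ⁻¹' F))) :=
        limsup_le_limsup (.of_forall fun i ↦ measure_mono subset_closure)
    _ ≤ (ν : Measure Ω) (closure (f ⁻¹' F)) :=
        limsup_measure_closed_le_of_tendsto lim isClosed_closure
    _ ≤ (ν : Measure Ω) (f ⁻¹' F) := measure_closure_preimage_le_of_ae_continuousAt hf hF

end MeasureTheory.ProbabilityMeasure

/-- Continuous mapping theorem, a.e.-continuous version: if `μ_n ⇒ μ` on a metric
space `S` and `h : S → S'` is Borel measurable with `μ`-null discontinuity set,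
then `μ_n ∘ h⁻¹ ⇒ μ ∘ h⁻¹`. (Weak convergence is expressed by convergence of
integrals of bounded continuous functions.) -/
theorem continuous_mapping_theorem
    {S S' : Type*} [MetricSpace S] [MeasurableSpace S] [BorelSpace S]
    [MetricSpace S'] [MeasurableSpace S'] [BorelSpace S']
    (μn : ℕ → Measure S) (μ : Measure S)
    [∀ n, IsProbabilityMeasure (μn n)] [IsProbabilityMeasure μ]
    (hweak : ∀ f : S →ᵇ ℝ,
      Tendsto (fun n => ∫ x, f x ∂(μn n)) atTop (nhds (∫ x, f x ∂μ)))
    (h : S → S') (hmeas : Measurable h)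
    (hcont : μ {x : S | ¬ ContinuousAt h x} = 0) :
    ∀ g : S' →ᵇ ℝ,
      Tendsto (fun n => ∫ y, g y ∂((μn n).map h)) atTop
        (nhds (∫ y, g y ∂(μ.map h))) := by
  let P : ProbabilityMeasure S := ⟨μ, inferInstance⟩
  let Ps : ℕ → ProbabilityMeasure S := fun n ↦ ⟨μn n, inferInstance⟩
  have hP : Tendsto Ps atTop (𝓝 P) :=
    ProbabilityMeasure.tendsto_iff_forall_integral_tendsto.mpr hweak
  exact ProbabilityMeasure.tendsto_iff_forall_integral_tendsto.mp
    (ProbabilityMeasure.tendsto_map_of_tendsto_of_ae_continuousAt hP hmeas (ae_iff.mpr hcont))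
end

section
/- Let f : [0,∞) → ℝ^d be continuous with f(0) = 0, let A be a linear subspace of ℝ^d, and suppose f(t) ∉ A for all t ∈ (0,1]. For any sequence f_k → f uniformly on [0,2] with f_k(0) = 0, the values T(f_k) = inf { t : f_k(t) ∈ A, f_k(u) ∉ A for t < u ≤ t+1 } converge to 0. -/
/-! Given `ε > 0`, the continuous path `f` avoids the closed set `A` on a whole window
`[a, a + 1]` with `0 < a ≤ ε`: on `[a, 1]` by hypothesis, and just beyond `1` by continuity.
The window is compact, so uniform convergence makes `F k` avoid `A` on it for large `k`.
Since `F k 0 = 0 ∈ A`, the last visit of `F k` to `A` before time `a` is then followed by a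
unit-length excursion, whence `T(F k) ≤ a ≤ ε`. -/

open scoped NNReal ENNReal Topology
open Filter Set Metric

noncomputable section

theorem TendstoUniformlyOn.eventually_mapsTo {ι X α : Type*} [TopologicalSpace X]
    [PseudoMetricSpace α] {F : ι → X → α} {f : X → α} {p : Filter ι} {K : Set X} {U : Set α}
    (hF : TendstoUniformlyOn F f p K) (hK : IsCompact K) (hf : ContinuousOn f K)
    (hU : IsOpen U) (hfU : MapsTo f K U) : ∀ᶠ n in p, MapsTo (F n) K U := by
  obtain ⟨δ, hδ, hthick⟩ := (hK.image_of_continuousOn hf).exists_thickening_subset_open hU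
    hfU.image_subset
  filter_upwards [tendstoUniformlyOn_iff.1 hF δ hδ] with n hn t ht
  exact hthick <| mem_thickening_iff.2
    ⟨f t, mem_image_of_mem f ht, by rw [dist_comm]; exact hn t ht⟩

theorem eventually_mapsTo_Icc_add_one {X : Type*} [TopologicalSpace X] {f : ℝ≥0 → X}
    {U : Set X} (hf : ContinuousAt f 1) (hU : IsOpen U) (hfU : MapsTo f (Ioc 0 1) U) :
    ∀ᶠ a in 𝓝[>] 0, MapsTo f (Icc a (a + 1)) U := by
  have hU1 : f ⁻¹' U ∈ 𝓝[≥] (1 : ℝ≥0) :=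
    nhdsWithin_le_nhds (hf.preimage_mem_nhds (hU.mem_nhds (hfU ⟨one_pos, le_rfl⟩)))
  obtain ⟨u, hu1, hu⟩ := mem_nhdsGE_iff_exists_Icc_subset.1 hU1
  filter_upwards [Ioc_mem_nhdsGT (tsub_pos_of_lt hu1)] with a ⟨ha0, hau⟩ t ⟨hat, hta⟩
  rcases le_total t 1 with ht1 | ht1
  · exact hfU ⟨ha0.trans_le hat, ht1⟩
  · refine hu ⟨ht1, hta.trans ?_⟩
    calc a + 1 ≤ u - 1 + 1 := by gcongr
      _ = u := tsub_add_cancel_of_le hu1.le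

theorem hittingTime_le_of_mapsTo {d : ℕ} {A : Submodule ℝ (EuclideanSpace ℝ (Fin d))}
    {F : ℝ≥0 → EuclideanSpace ℝ (Fin d)} (hF : Continuous F) (hF0 : F 0 ∈ A) {a : ℝ≥0}
    (hFa : MapsTo F (Icc a (a + 1)) (A : Set (EuclideanSpace ℝ (Fin d)))ᶜ) :
    hittingTime d A F ≤ a := by
  set S : Set ℝ≥0 := Iic a ∩ F ⁻¹' A
  have hS : S.Nonempty := ⟨0, mem_Iic.2 zero_le, hF0⟩
  have hSbdd : BddAbove S := ⟨a, fun _ ht => ht.1⟩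
  have hSclosed : IsClosed S :=
    isClosed_Iic.inter ((Submodule.closed_of_finiteDimensional A).preimage hF)
  set t := sSup S
  have htS : t ∈ S := hSclosed.csSup_mem hS hSbdd
  refine le_trans ?_ (ENNReal.coe_le_coe.2 htS.1)
  refine sInf_le ⟨t, rfl, htS.2, fun u htu hut huA => ?_⟩
  rcases le_or_gt u a with hua | hau
  · exact htu.not_ge (le_csSup hSbdd ⟨hua, huA⟩)
  · exact hFa ⟨hau.le, hut.trans (by gcongr; exact htS.1)⟩ huA

theorem tendsto_hittingTime_of_tendstoUniformlyOn_general (d : ℕ)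
    (A : Submodule ℝ (EuclideanSpace ℝ (Fin d)))
    (f : ℝ≥0 → EuclideanSpace ℝ (Fin d)) (hf : Continuous f)
    (havoid : ∀ t : ℝ≥0, 0 < t → t ≤ 1 → f t ∉ (A : Set (EuclideanSpace ℝ (Fin d))))
    (F : ℕ → ℝ≥0 → EuclideanSpace ℝ (Fin d))
    (hFcont : ∀ k, Continuous (F k)) (hF0 : ∀ k, F k 0 = 0)
    (hFconv : TendstoUniformlyOn F f atTop (Set.Icc (0 : ℝ≥0) 2)) :
    Tendsto (fun k => hittingTime d A (F k)) atTop (nhds 0) := by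
  have hAc : IsOpen (A : Set (EuclideanSpace ℝ (Fin d)))ᶜ :=
    (Submodule.closed_of_finiteDimensional A).isOpen_compl
  refine ENNReal.tendsto_nhds_zero.2 fun ε hε => ?_
  obtain ⟨r, hr0, hrε⟩ := ENNReal.lt_iff_exists_nnreal_btwn.1 hε
  have hsmall : ∀ᶠ a in 𝓝[>] 0, a < r ∧ a < 1 := nhdsWithin_le_nhds
    ((eventually_lt_nhds (ENNReal.coe_pos.1 hr0)).and (eventually_lt_nhds one_pos))
  obtain ⟨a, hfa, har, ha1⟩ :=
    ((eventually_mapsTo_Icc_add_one hf.continuousAt hAc fun t ht => havoid t ht.1 ht.2).and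
      hsmall).exists
  have hwindow : Icc a (a + 1) ⊆ Icc 0 2 := fun t ht =>
    ⟨zero_le, ht.2.trans <| calc a + 1 ≤ 1 + 1 := by gcongr
      _ = 2 := one_add_one_eq_two⟩
  filter_upwards [(hFconv.mono hwindow).eventually_mapsTo isCompact_Icc hf.continuousOn hAc hfa]
    with k hk
  calc hittingTime d A (F k) ≤ a := hittingTime_le_of_mapsTo (hFcont k) (hF0 k ▸ A.zero_mem) hk
    _ ≤ ε := (ENNReal.coe_le_coe.2 har.le).trans hrε.le

/-- If `f ∈ C_0^d[0,∞)` avoids `A` on `(0,1]` and `f_k → f` uniformly on `[0,2]`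
with `f_k ∈ C_0^d[0,∞)`, then `T(f_k) → 0`. -/
theorem tendsto_hittingTime_of_tendstoUniformlyOn (d : ℕ)
    (A : Submodule ℝ (EuclideanSpace ℝ (Fin d)))
    (f : ℝ≥0 → EuclideanSpace ℝ (Fin d)) (hf : Continuous f) (hf0 : f 0 = 0)
    (havoid : ∀ t : ℝ≥0, 0 < t → t ≤ 1 → f t ∉ (A : Set (EuclideanSpace ℝ (Fin d))))
    (F : ℕ → ℝ≥0 → EuclideanSpace ℝ (Fin d))
    (hFcont : ∀ k, Continuous (F k)) (hF0 : ∀ k, F k 0 = 0)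
    (hFconv : TendstoUniformlyOn F f atTop (Set.Icc (0 : ℝ≥0) 2)) :
    Tendsto (fun k => hittingTime d A (F k)) atTop (nhds 0) :=
  tendsto_hittingTime_of_tendstoUniformlyOn_general d A f hf havoid F hFcont hF0 hFconv
end
end
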